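/- Let f₀, f₁, …, f_{n-1} be complex valued functions on the unit disc and, for j = 0, …, n-1, define D_j(z) = Σ_{k=0}^{n-1} |z|^{jk} · f_k(z) · (1-|z|²)^n / (1-|z|^{j+2})^k. Then for each 0 ≤ k ≤ n-1 there exist functions b_{jk} on 𝔻, bounded on the annulus 1/2 < |z| < 1, such that f_k(z)·(1-|z|²)^{n-k} = Σ_{j=0}^{n-1} b_{jk}(z)·D_j(z) for all z with 0 < |z| < 1. -/

import Mathlib

/-!
With the nodes `s_j = |z|^j (1 - |z|²) / (1 - |z|^(j+2))` one has
`D_j = ∑ᵢ s_j^i g_i` where `g_i = (1 - |z|²)^(n-i) f_i`, i.e. `D = W g` for the Vandermonde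
matrix `W` of the nodes, and `b_{jk}` is the `(k, j)` entry of `W⁻¹`. Cancelling `1 - |z|` gives
`s_j = |z|^j (1 + |z|) / (1 + |z| + ⋯ + |z|^(j+1))`, which is continuous up to `|z| = 1` and
strictly decreasing in `j` for `|z| > 0`. So `W` is invertible and continuous on the compact
annulus `1/2 ≤ |z| ≤ 1`, and the entries of `W⁻¹` are bounded there.
-/

open Finset Matrix

noncomputable def vandermondeNode (j : ℕ) (x : ℝ) : ℝ :=
  x ^ j * (1 + x) / ∑ m ∈ range (j + 2), x ^ m

lemma vandermondeNode_eq {x : ℝ} (hx : x ≠ 1) (j : ℕ) :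
    vandermondeNode j x = x ^ j * (1 - x ^ 2) / (1 - x ^ (j + 2)) := by
  have hx' : 1 - x ≠ 0 := sub_ne_zero.mpr hx.symm
  rw [vandermondeNode, ← mul_neg_geom_sum x (j + 2), ← mul_div_mul_left _ _ hx']
  ring

lemma continuousOn_vandermondeNode (j : ℕ) : ContinuousOn (vandermondeNode j) (Set.Ici 0) :=
  ContinuousOn.div (by fun_prop) (by fun_prop) fun _ hx => (geom_sum_pos hx (by omega)).ne'

lemma vandermondeNode_succ_lt {x : ℝ} (hx : 0 < x) (j : ℕ) :
    vandermondeNode (j + 1) x < vandermondeNode j x := by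
  set S := ∑ m ∈ range (j + 2), x ^ m
  have hS : 0 < S := geom_sum_pos hx.le (by omega)
  rw [vandermondeNode, vandermondeNode, geom_sum_succ, div_lt_div_iff₀ (by positivity) hS]
  have hpos : 0 < x ^ j * (1 + x) := by positivity
  rw [pow_succ]
  nlinarith

lemma injective_vandermondeNode {x : ℝ} (hx : 0 < x) :
    Function.Injective fun j => vandermondeNode j x :=
  (strictAnti_nat_of_succ_lt (vandermondeNode_succ_lt hx)).injective

noncomputable def nodeMatrix (n : ℕ) (x : ℝ) : Matrix (Fin n) (Fin n) ℂ :=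
  vandermonde fun j => (vandermondeNode j x : ℂ)

lemma det_nodeMatrix_ne_zero (n : ℕ) {x : ℝ} (hx : 0 < x) : (nodeMatrix n x).det ≠ 0 := by
  rw [nodeMatrix, det_vandermonde_ne_zero_iff]
  intro i j hij
  exact Fin.val_injective (injective_vandermondeNode hx (Complex.ofReal_inj.mp hij))

lemma continuous_nodeMatrix_norm (n : ℕ) : Continuous fun z : ℂ => nodeMatrix n ‖z‖ :=
  continuous_matrix fun i _ => (Complex.continuous_ofReal.comp
    ((continuousOn_vandermondeNode i).comp_continuous continuous_norm norm_nonneg)).pow _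

lemma nodeMatrix_mulVec_apply (n : ℕ) {x : ℝ} (hx : x ≠ 1) (c : Fin n → ℂ) (j : Fin n) :
    (nodeMatrix n x *ᵥ fun i => ((1 - x ^ 2 : ℝ) : ℂ) ^ (n - (i : ℕ)) * c i) j =
      ∑ i : Fin n, ((x ^ ((j : ℕ) * i) * (1 - x ^ 2) ^ n /
        (1 - x ^ ((j : ℕ) + 2)) ^ (i : ℕ) : ℝ) : ℂ) * c i := by
  rw [mulVec_apply_eq_sum]
  refine Fintype.sum_congr _ _ fun i => ?_
  have hcoeff : x ^ ((j : ℕ) * i) * (1 - x ^ 2) ^ n / (1 - x ^ ((j : ℕ) + 2)) ^ (i : ℕ) =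
      vandermondeNode j x ^ (i : ℕ) * (1 - x ^ 2) ^ (n - i) := by
    rw [vandermondeNode_eq hx, div_pow, mul_pow, ← pow_mul, div_mul_eq_mul_div, mul_assoc,
      ← pow_add, Nat.add_sub_cancel' i.isLt.le]
  rw [hcoeff, nodeMatrix, vandermonde_apply]
  push_cast
  ring

lemma IsCompact.exists_bound_inv_apply {X 𝕜 ι : Type*} [TopologicalSpace X] [NormedField 𝕜]
    [Fintype ι] [DecidableEq ι] {K : Set X} (hK : IsCompact K) {A : X → Matrix ι ι 𝕜}
    (hA : ContinuousOn A K) (hdet : ∀ x ∈ K, (A x).det ≠ 0) (i j : ι) :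
    ∃ M, ∀ x ∈ K, ‖(A x)⁻¹ i j‖ ≤ M := by
  have hinv : ContinuousOn (fun x => (A x)⁻¹) K := fun x hx =>
    ContinuousAt.comp_continuousWithinAt (continuousAt_matrix_inv (A x)
      (by rw [Ring.inverse_eq_inv']; exact continuousAt_inv₀ (hdet x hx))) (hA x hx)
  exact hK.exists_bound_of_continuousOn ((continuous_id.matrix_elem i j).comp_continuousOn hinv)

theorem linear_system_lemma_general (n : ℕ) (f : Fin n → ℂ → ℂ) (k : Fin n) :
    ∃ b : Fin n → ℂ → ℂ,
      (∀ j : Fin n, ∃ M : ℝ, ∀ z : ℂ, 1 / 2 < ‖z‖ → ‖z‖ < 1 → ‖b j z‖ ≤ M) ∧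
      ∀ z : ℂ, 0 < ‖z‖ → ‖z‖ < 1 →
        f k z * ((1 - ‖z‖ ^ 2 : ℝ) : ℂ) ^ (n - (k : ℕ)) =
          ∑ j : Fin n, b j z *
            ∑ i : Fin n,
              ((‖z‖ ^ ((j : ℕ) * (i : ℕ)) * (1 - ‖z‖ ^ 2) ^ n /
                (1 - ‖z‖ ^ ((j : ℕ) + 2)) ^ (i : ℕ) : ℝ) : ℂ) * f i z := by
  refine ⟨fun j z => (nodeMatrix n ‖z‖)⁻¹ k j, fun j => ?_, fun z hz0 hz1 => ?_⟩
  · have hK : IsCompact (Metric.closedBall (0 : ℂ) 1 ∩ {z | 1 / 2 ≤ ‖z‖}) :=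
      (isCompact_closedBall 0 1).inter_right (isClosed_le continuous_const continuous_norm)
    obtain ⟨M, hM⟩ := hK.exists_bound_inv_apply
      (continuous_nodeMatrix_norm n).continuousOn
      (fun z hz => det_nodeMatrix_ne_zero n (one_half_pos.trans_le hz.2)) k j
    exact ⟨M, fun z h1 h2 => hM z ⟨by simpa using h2.le, h1.le⟩⟩
  · have hdet : IsUnit (nodeMatrix n ‖z‖).det := (det_nodeMatrix_ne_zero n hz0).isUnit
    simp_rw [← nodeMatrix_mulVec_apply n hz1.ne (fun i => f i z), ← mulVec_apply_eq_sum,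
      mulVec_mulVec, nonsing_inv_mul _ hdet, one_mulVec, mul_comm]

theorem linear_system_lemma (n : ℕ) (hn : 1 ≤ n) (f : Fin n → ℂ → ℂ) (k : Fin n) :
    ∃ b : Fin n → ℂ → ℂ,
      (∀ j : Fin n, ∃ M : ℝ, ∀ z : ℂ, 1 / 2 < ‖z‖ → ‖z‖ < 1 → ‖b j z‖ ≤ M) ∧
      ∀ z : ℂ, 0 < ‖z‖ → ‖z‖ < 1 →
        f k z * ((1 - ‖z‖ ^ 2 : ℝ) : ℂ) ^ (n - (k : ℕ)) =
          ∑ j : Fin n, b j z *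
            ∑ i : Fin n,
              ((‖z‖ ^ ((j : ℕ) * (i : ℕ)) * (1 - ‖z‖ ^ 2) ^ n /
                (1 - ‖z‖ ^ ((j : ℕ) + 2)) ^ (i : ℕ) : ℝ) : ℂ) * f i z :=
  linear_system_lemma_general n f k
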